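/- For every n ≥ 2 and every set M = {m_1 < m_2 < … < m_n} of positive integers, the n × n matrix T_n(M) with (r,c) entry T_{n,c}(m_r) = (m_r − 1)! · (n!/c!) · e_{n−c}(1, 1/2, …, 1/(m_r − 1)) has nonzero determinant, and all entries of its inverse are rational. -/

import Mathlib

open Finset

/-- `esym x k v` = v-th elementary symmetric polynomial in `x 0, …, x (k-1)`. -/
noncomputable def esym (x : ℕ → ℝ) (k v : ℕ) : ℝ :=
  ∑ s ∈ (Finset.range k).powersetCard v, ∏ i ∈ s, x i

/-- The rational coefficient `T_{n,c}(m) = (m−1)!·(n!/c!)·e_{n−c}(1,1/2,…,1/(m−1))`. -/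
noncomputable def Tcoef (n c m : ℕ) : ℝ :=
  ((Nat.factorial (m - 1)) : ℝ) * (((Nat.factorial n) : ℝ) / ((Nat.factorial c) : ℝ)) *
    esym (fun i => 1 / ((i : ℝ) + 1)) (m - 1) (n - c)

open Polynomial Matrix


noncomputable def ppoly (a m : ℕ) : Polynomial ℝ :=
  ∏ i ∈ Finset.range (m - a), (Polynomial.X + Polynomial.C ((a + i : ℕ) : ℝ))

lemma ppoly_self (a : ℕ) : ppoly a a = 1 := by simp [ppoly]

lemma ppoly_succ {a m : ℕ} (h : a < m) :
    ppoly a m = (Polynomial.X + Polynomial.C (a : ℝ)) * ppoly (a + 1) m := by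
  have hma : m - a = (m - (a + 1)) + 1 := by omega
  have hprod : ppoly (a + 1) m =
      ∏ i ∈ Finset.range (m - (a + 1)), (Polynomial.X + Polynomial.C ((a + (i + 1) : ℕ) : ℝ)) := by
    rw [ppoly]
    apply Finset.prod_congr rfl
    intro i _
    have e : a + 1 + i = a + (i + 1) := by omega
    rw [e]
  rw [ppoly, hma, Finset.prod_range_succ', hprod]
  rw [mul_comm]
  norm_num

lemma coeff_ppoly_split {a m : ℕ} (h : a < m) (v : ℕ) :
    (ppoly a m).coeff v =
      (if v = 0 then 0 else (ppoly (a + 1) m).coeff (v - 1)) + (a : ℝ) * (ppoly (a + 1) m).coeff v := by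
  rw [ppoly_succ h, add_mul, Polynomial.coeff_add, Polynomial.coeff_C_mul]
  congr 1
  cases v with
  | zero => simp
  | succ w => simp [Polynomial.coeff_X_mul]

lemma det_col_split {k : ℕ} (A B : Fin k → Fin k → ℝ) :
    Matrix.det (fun i j => A i j + B i j) =
      ∑ ε : Fin k → Bool, Matrix.det (fun i j => if ε j then B i j else A i j) := by
  have key := (Matrix.detRowAlternating (R := ℝ) (n := Fin k)).toMultilinearMap.map_sum
      (g := fun j (b : Bool) => (fun i => if b then B i j else A i j))
  have h1 : Matrix.det (fun i j => A i j + B i j) =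
      (Matrix.detRowAlternating (R := ℝ) (n := Fin k)).toMultilinearMap
        (fun j => ∑ b : Bool, (fun i => if b then B i j else A i j)) := by
    show Matrix.det (Matrix.of fun i j => A i j + B i j) = _
    rw [← Matrix.det_transpose]
    congr 1
    funext j i
    simp [Fintype.sum_bool]
    ring
  rw [h1, key]
  apply Finset.sum_congr rfl
  intro ε _
  rw [← Matrix.det_transpose (fun i j => if ε j then B i j else A i j)]
  rfl

lemma main_pos : ∀ (N : ℕ), ∀ (k a : ℕ), 1 ≤ a → ∀ (m v : Fin k → ℕ),
    StrictMono m → (∀ r, a ≤ m r) → StrictMono v →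
    (∑ r, (m r - a)) + k ≤ N →
    0 ≤ Matrix.det (fun r c : Fin k => (ppoly a (m r)).coeff (v c)) ∧
    ((∀ c, v c ≤ m c - a) →
      0 < Matrix.det (fun r c : Fin k => (ppoly a (m r)).coeff (v c))) := by
  intro N
  induction N with
  | zero =>
    intro k a ha m v hm hma hv hN
    have hk : k = 0 := by omega
    subst hk
    constructor
    · show (0:ℝ) ≤ Matrix.det (Matrix.of fun r c : Fin 0 => (ppoly a (m r)).coeff (v c))
      rw [Matrix.det_isEmpty]; norm_num
    · intro _
      show (0:ℝ) < Matrix.det (Matrix.of fun r c : Fin 0 => (ppoly a (m r)).coeff (v c))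
      rw [Matrix.det_isEmpty]; norm_num
  | succ N ih =>
    intro k a ha m v hm hma hv hN
    match k, m, v, hm, hma, hv, hN with
    | 0, m, v, hm, hma, hv, hN =>
      constructor
      · show (0:ℝ) ≤ Matrix.det (Matrix.of fun r c : Fin 0 => (ppoly a (m r)).coeff (v c))
        rw [Matrix.det_isEmpty]; norm_num
      · intro _
        show (0:ℝ) < Matrix.det (Matrix.of fun r c : Fin 0 => (ppoly a (m r)).coeff (v c))
        rw [Matrix.det_isEmpty]; norm_num
    | k + 1, m, v, hm, hma, hv, hN =>
    by_cases hma0 : m 0 = a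
    · -- first row comes from the constant polynomial 1
      have hrow : ∀ c : Fin (k + 1),
          (ppoly a (m 0)).coeff (v c) = if v c = 0 then 1 else 0 := by
        intro c
        rw [hma0, ppoly_self, Polynomial.coeff_one]
      by_cases hv0 : v 0 = 0
      · -- Laplace expansion along row 0
        set M : Matrix (Fin (k + 1)) (Fin (k + 1)) ℝ :=
          fun r c => (ppoly a (m r)).coeff (v c) with hM
        have hM0 : ∀ c : Fin (k + 1), M 0 c = if c = 0 then 1 else 0 := by
          intro c
          rw [hM]
          simp only
          rw [hrow c]
          by_cases hc : c = 0
          · simp [hc, hv0]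
          · have : (0 : Fin (k + 1)) < c := by
              exact lt_of_le_of_ne (Fin.zero_le c) (Ne.symm hc)
            have : v 0 < v c := hv this
            simp [hc]
            omega
        have hdet : M.det = Matrix.det (fun r c : Fin k =>
            (ppoly a (m r.succ)).coeff (v c.succ)) := by
          rw [Matrix.det_succ_row_zero]
          rw [Finset.sum_eq_single 0]
          · rw [hM0 0]
            norm_num [Fin.succAbove_zero]
            rfl
          · intro b _ hb
            rw [hM0 b]
            simp [hb]
          · intro h; exact absurd (Finset.mem_univ 0) h
        have hsum : (∑ r : Fin k, (m r.succ - a)) + k ≤ N := by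
          have := Fin.sum_univ_succ (f := fun r => m r - a)
          omega
        have hrec := ih k a ha (fun r => m r.succ) (fun c => v c.succ)
          (hm.comp Fin.strictMono_succ) (fun r => hma r.succ)
          (hv.comp Fin.strictMono_succ) hsum
        constructor
        · rw [hdet]
          exact hrec.1
        · intro hcompat
          rw [hdet]
          apply hrec.2
          intro c
          show v c.succ ≤ m c.succ - a
          exact hcompat c.succ
      · -- row 0 is zero
        have hzero : Matrix.det (fun r c : Fin (k+1) => (ppoly a (m r)).coeff (v c)) = 0 := by
          apply Matrix.det_eq_zero_of_row_eq_zero 0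
          intro c
          rw [hrow c]
          have : v 0 ≤ v c := hv.monotone (Fin.zero_le c)
          simp
          omega
        constructor
        · rw [hzero]
        · intro hcompat
          exfalso
          have := hcompat 0
          rw [hma0] at this
          omega
    · -- split off the factor (X + a)
      have ham : ∀ r, a < m r := by
        intro r
        have h0 : a < m 0 := lt_of_le_of_ne (hma 0) (Ne.symm hma0)
        exact lt_of_lt_of_le h0 (hm.monotone (Fin.zero_le r))
      have hsplit : (fun r c : Fin (k+1) => (ppoly a (m r)).coeff (v c)) =
          fun r c : Fin (k+1) =>
            (if v c = 0 then 0 else (ppoly (a + 1) (m r)).coeff (v c - 1)) +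
            ((a : ℝ) * (ppoly (a + 1) (m r)).coeff (v c)) := by
        funext r c
        exact coeff_ppoly_split (ham r) (v c)
      rw [hsplit, det_col_split]
      -- analysis of an individual term
      have hterm : ∀ ε : Fin (k+1) → Bool,
          (0 ≤ Matrix.det (fun r c : Fin (k+1) => if ε c then
              ((a : ℝ) * (ppoly (a + 1) (m r)).coeff (v c)) else
              (if v c = 0 then 0 else (ppoly (a + 1) (m r)).coeff (v c - 1)))) ∧
          (((∀ c, (ε c = false → v c ≠ 0)) ∧
            StrictMono (fun c => if ε c then v c else v c - 1) ∧
            (∀ c, (if ε c then v c else v c - 1) ≤ m c - (a + 1))) →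
            0 < Matrix.det (fun r c : Fin (k+1) => if ε c then
              ((a : ℝ) * (ppoly (a + 1) (m r)).coeff (v c)) else
              (if v c = 0 then 0 else (ppoly (a + 1) (m r)).coeff (v c - 1)))) := by
        intro ε
        set v' : Fin (k+1) → ℕ := fun c => if ε c then v c else v c - 1 with hv'
        by_cases hz : ∃ c, ε c = false ∧ v c = 0
        · obtain ⟨c, hc1, hc2⟩ := hz
          have hdz : Matrix.det (fun r c : Fin (k+1) => if ε c then
              ((a : ℝ) * (ppoly (a + 1) (m r)).coeff (v c)) else
              (if v c = 0 then 0 else (ppoly (a + 1) (m r)).coeff (v c - 1))) = 0 := by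
            apply Matrix.det_eq_zero_of_column_eq_zero c
            intro r
            simp [hc1, hc2]
          constructor
          · rw [hdz]
          · rintro ⟨h1, -, -⟩
            exact absurd hc2 (h1 c hc1)
        · push_neg at hz
          have hmat : (fun r c : Fin (k+1) => if ε c then
              ((a : ℝ) * (ppoly (a + 1) (m r)).coeff (v c)) else
              (if v c = 0 then 0 else (ppoly (a + 1) (m r)).coeff (v c - 1))) =
              Matrix.of (fun r c : Fin (k+1) =>
                (fun c => if ε c then (a : ℝ) else 1) c *
                (Matrix.of fun r c : Fin (k+1) => (ppoly (a + 1) (m r)).coeff (v' c)) r c) := by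
            funext r c
            by_cases h : ε c
            · simp [Matrix.of_apply, h, hv']
            · have hne : v c ≠ 0 := hz c (by simp [h])
              simp [Matrix.of_apply, h, hne, hv']
          rw [hmat, Matrix.det_mul_row]
          have hw : (0:ℝ) < ∏ c : Fin (k+1), (if ε c then (a : ℝ) else 1) := by
            apply Finset.prod_pos
            intro c _
            by_cases h : ε c <;> simp [h]
            exact_mod_cast Nat.pos_of_ne_zero (by omega)
          by_cases hsm : StrictMono v'
          · have hmeas : (∑ r : Fin (k+1), (m r - (a+1))) + (k+1) ≤ N := by
              have hstep : ∀ r : Fin (k+1), m r - (a+1) + 1 = m r - a := by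
                intro r
                have := ham r
                omega
              have hsum2 : (∑ r : Fin (k+1), (m r - (a+1))) + (k+1) =
                  ∑ r : Fin (k+1), (m r - a) := by
                have h' : ∑ r : Fin (k+1), (m r - a) =
                    ∑ r : Fin (k+1), ((m r - (a+1)) + 1) :=
                  Finset.sum_congr rfl (fun r _ => (hstep r).symm)
                rw [h', Finset.sum_add_distrib]
                simp
              omega
            have hrec := ih (k+1) (a+1) (by omega) m v' hm
              (fun r => ham r) hsm hmeas
            constructor
            · exact mul_nonneg hw.le hrec.1
            · rintro ⟨-, -, h3⟩
              exact mul_pos hw (hrec.2 h3)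
          · have hv'le : ∀ c, v' c ≤ v c ∧ v c - 1 ≤ v' c := by
              intro c
              by_cases h : ε c <;> simp [hv', h]
            rw [StrictMono] at hsm
            push_neg at hsm
            obtain ⟨c, d, hcd, hle⟩ := hsm
            have heq : v' c = v' d := by
              have h1 := hv'le c
              have h2 := hv'le d
              have h3 : v c < v d := hv hcd
              omega
            have hdz : Matrix.det (Matrix.of fun r c : Fin (k+1) =>
                (ppoly (a + 1) (m r)).coeff (v' c)) = 0 := by
              apply Matrix.det_zero_of_column_eq (ne_of_lt hcd)
              intro r
              simp only [Matrix.of_apply]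
              rw [heq]
            rw [hdz, mul_zero]
            constructor
            · exact le_rfl
            · rintro ⟨-, h2, -⟩
              exact absurd h2 (by rw [StrictMono]; push_neg; exact ⟨c, d, hcd, hle⟩)
      constructor
      · exact Finset.sum_nonneg (fun ε _ => (hterm ε).1)
      · intro hcompat
        apply Finset.sum_pos' (fun ε _ => (hterm ε).1)
        refine ⟨fun c => decide (v c + a < m c), Finset.mem_univ _, ?_⟩
        apply (hterm _).2
        refine ⟨?_, ?_, ?_⟩
        · intro c hc
          have := ham c
          have hcc := hcompat c
          simp only [decide_eq_false_iff_not, not_lt] at hc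
          omega
        · intro c d hcd
          have f1 : v c < v d := hv hcd
          have f2 : m c < m d := hm hcd
          have f3 : v c ≤ m c - a := hcompat c
          have f4 : v d ≤ m d - a := hcompat d
          have f5 : a < m c := ham c
          have f6 : a < m d := ham d
          simp only [decide_eq_true_eq]
          by_cases h1 : v c + a < m c <;> by_cases h2 : v d + a < m d <;>
            simp [h1, h2] <;> omega
        · intro c
          have f3 : v c ≤ m c - a := hcompat c
          have f5 : a < m c := ham c
          simp only [decide_eq_true_eq]
          by_cases h1 : v c + a < m c <;> simp [h1] <;> omega


lemma coeff_ppoly_zero_of_lt {a m v : ℕ} (h : m - a < v) : (ppoly a m).coeff v = 0 := by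
  apply Polynomial.coeff_eq_zero_of_natDegree_lt
  calc (ppoly a m).natDegree ≤ m - a := by
        rw [ppoly]
        apply le_trans (Polynomial.natDegree_prod_le _ _)
        apply le_trans (Finset.sum_le_card_nsmul _ _ 1 ?_)
        · simp
        · intro i _
          exact le_of_eq (Polynomial.natDegree_X_add_C _)
    _ < v := h

lemma factorial_esym_eq (m v : ℕ) :
    ((Nat.factorial (m - 1) : ℝ)) * esym (fun i => 1 / ((i : ℝ) + 1)) (m - 1) v =
      (ppoly 1 m).coeff v := by
  by_cases hv : v ≤ m - 1
  · have hcard : (Finset.range (m - 1)).card = m - 1 := Finset.card_range _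
    have hc := Finset.prod_X_add_C_coeff (Finset.range (m - 1))
      (fun i => ((1 + i : ℕ) : ℝ)) (k := v) (by rw [hcard]; exact hv)
    have hpp : ppoly 1 m = ∏ i ∈ Finset.range (m - 1), (Polynomial.X + Polynomial.C ((1 + i : ℕ) : ℝ)) := rfl
    rw [hpp, hc, hcard]
    rw [esym, Finset.mul_sum]
    apply Finset.sum_nbij' (i := fun s => Finset.range (m - 1) \ s)
      (j := fun t => Finset.range (m - 1) \ t)
    · intro s hs
      rw [Finset.mem_powersetCard] at hs ⊢
      refine ⟨Finset.sdiff_subset, ?_⟩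
      rw [Finset.card_sdiff_of_subset hs.1, hcard, hs.2]
    · intro t ht
      rw [Finset.mem_powersetCard] at ht ⊢
      refine ⟨Finset.sdiff_subset, ?_⟩
      rw [Finset.card_sdiff_of_subset ht.1, hcard, ht.2]
      omega
    · intro s hs
      rw [Finset.mem_powersetCard] at hs
      exact Finset.sdiff_sdiff_eq_self hs.1
    · intro t ht
      rw [Finset.mem_powersetCard] at ht
      exact Finset.sdiff_sdiff_eq_self ht.1
    · intro s hs
      rw [Finset.mem_powersetCard] at hs
      have hfact : ((Nat.factorial (m - 1) : ℝ)) =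
          ∏ i ∈ Finset.range (m - 1), ((1 + i : ℕ) : ℝ) := by
        rw [← Nat.cast_prod]
        congr 1
        rw [← Finset.prod_range_add_one_eq_factorial]
        apply Finset.prod_congr rfl
        intro i _
        omega
      rw [hfact, ← Finset.prod_sdiff hs.1, mul_assoc, ← Finset.prod_mul_distrib]
      have : ∀ i ∈ s, ((1 + i : ℕ) : ℝ) * (1 / ((i : ℝ) + 1)) = 1 := by
        intro i _
        push_cast
        rw [add_comm]
        field_simp
      rw [Finset.prod_congr rfl this, Finset.prod_const_one, mul_one]
  · rw [coeff_ppoly_zero_of_lt (by omega)]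
    rw [esym, Finset.powersetCard_eq_empty.mpr (by rw [Finset.card_range]; omega)]
    simp


def Tq (n c m : ℕ) : ℚ :=
  ((Nat.factorial (m - 1)) : ℚ) * (((Nat.factorial n) : ℚ) / ((Nat.factorial c) : ℚ)) *
    ∑ s ∈ (Finset.range (m - 1)).powersetCard (n - c), ∏ i ∈ s, (1 / ((i : ℚ) + 1))

lemma Tq_cast (n c m : ℕ) : ((Tq n c m : ℚ) : ℝ) = Tcoef n c m := by
  rw [Tcoef, esym, Tq]
  push_cast
  ring

theorem stmt5 (n : ℕ) (hn : 2 ≤ n) (m : Fin n → ℕ) (hmono : StrictMono m)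
    (hm : ∀ r, 1 ≤ m r) :
    Matrix.det (fun r c : Fin n => Tcoef n ((c : ℕ) + 1) (m r)) ≠ 0 ∧
    ∀ i j : Fin n,
      ∃ q : ℚ, (fun r c : Fin n => Tcoef n ((c : ℕ) + 1) (m r) : Matrix (Fin n) (Fin n) ℝ)⁻¹ i j = (q : ℝ) := by
  have hval : ∀ c : Fin n, (c : ℕ) < m c := by
    have key : ∀ j : ℕ, ∀ c : Fin n, (c : ℕ) = j → j < m c := by
      intro j
      induction j with
      | zero => intro c _; have := hm c; omega
      | succ i ihj =>
        intro c hc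
        have hi : i < n := by omega
        have hd : (⟨i, hi⟩ : Fin n) < c := by
          rw [Fin.lt_def]
          show i < (c : ℕ)
          omega
        have h1 := ihj ⟨i, hi⟩ rfl
        have h2 := hmono hd
        omega
    intro c
    exact key (c : ℕ) c rfl
  set A : Matrix (Fin n) (Fin n) ℝ := fun r c => (ppoly 1 (m r)).coeff (c : ℕ) with hA
  have hdetA : 0 < A.det := by
    refine (main_pos ((∑ r, (m r - 1)) + n) n 1 le_rfl m (fun c => (c : ℕ)) hmono
      (fun r => hm r) (fun _ _ h => h) le_rfl).2 ?_
    intro c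
    have := hval c
    have := hm c
    omega
  set M : Matrix (Fin n) (Fin n) ℝ := fun r c => Tcoef n ((c : ℕ) + 1) (m r) with hMdef
  have hMK : M = Matrix.of (fun r c : Fin n =>
      (fun c : Fin n => (Nat.factorial n : ℝ) / (Nat.factorial ((c : ℕ) + 1) : ℝ)) c *
      (A.submatrix id Fin.revPerm) r c) := by
    funext r c
    show Tcoef n ((c : ℕ) + 1) (m r) = _
    have hrev : (((Fin.revPerm c : Fin n)) : ℕ) = n - ((c : ℕ) + 1) := by
      simp [Fin.revPerm, Fin.val_rev]
    rw [Tcoef]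
    have hfe := factorial_esym_eq (m r) (n - ((c : ℕ) + 1))
    simp only [Matrix.of_apply, Matrix.submatrix_apply, id_eq]
    simp only [hA, hrev]
    rw [← hfe]
    ring
  have hsign := Int.units_eq_one_or (Equiv.Perm.sign (Fin.revPerm (n := n)))
  have hdetM : M.det ≠ 0 := by
    rw [hMK, Matrix.det_mul_row, Matrix.det_permute']
    have h1 : (0 : ℝ) < ∏ c : Fin n, (Nat.factorial n : ℝ) / (Nat.factorial ((c : ℕ) + 1) : ℝ) := by
      apply Finset.prod_pos
      intro c _
      apply div_pos <;> exact_mod_cast Nat.factorial_pos _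
    apply mul_ne_zero h1.ne'
    apply mul_ne_zero ?_ hdetA.ne'
    rcases hsign with h | h <;> rw [h] <;> norm_num
  constructor
  · exact hdetM
  · intro i j
    refine ⟨(Tq n ((j : ℕ) + 1) (m i))⁻¹, ?_⟩
    show (M i j)⁻¹ = _
    have : M i j = ((Tq n ((j : ℕ) + 1) (m i) : ℚ) : ℝ) := (Tq_cast _ _ _).symm
    rw [this, ← Rat.cast_inv]
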